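/- arXiv:2303.14867 — 3 statements merged into one kernel-verified Lean document; each statement's English description precedes it below -/
import Mathlib

section
/- For phi(t) = (t-1)^2 on t ≥ 0 (and +∞ for t < 0), a probability measure P on a finite set, and a bounded random variable Y, the robust value sup over Q ≪ P with E_P[(dQ/dP - 1)^2] ≤ δ of E_Q[Y] equals E_P[Y] + √δ · √(Var_P[Y]), provided 1 + √δ·(Y - E_P[Y])/√(Var_P[Y]) ≥ 0 P-almost surely. -/
open MeasureTheory Filter Topology Real Set

/-- Cauchy–Schwarz for integrals on a finite sample space. -/
lemma integral_cs_aux {α : Type*} [Fintype α] [MeasurableSpace α] [MeasurableSingletonClass α]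
    (P : Measure α) [IsFiniteMeasure P] (g h : α → ℝ) :
    (∫ x, g x * h x ∂P)^2 ≤ (∫ x, (g x)^2 ∂P) * (∫ x, (h x)^2 ∂P) := by
  rw [integral_fintype .of_finite, integral_fintype .of_finite,
    integral_fintype .of_finite]
  simp only [smul_eq_mul, measureReal_def]
  have key := Finset.sum_mul_sq_le_sq_mul_sq Finset.univ
    (fun x => Real.sqrt (P {x}).toReal * g x) (fun x => Real.sqrt (P {x}).toReal * h x)
  calc (∑ x, (P {x}).toReal * (g x * h x))^2
      = (∑ x, (Real.sqrt (P {x}).toReal * g x) * (Real.sqrt (P {x}).toReal * h x))^2 := by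
        congr 1; apply Finset.sum_congr rfl; intro x _
        have : Real.sqrt (P {x}).toReal * Real.sqrt (P {x}).toReal = (P {x}).toReal :=
          Real.mul_self_sqrt ENNReal.toReal_nonneg
        have h2 : Real.sqrt (P {x}).toReal ^ 2 = (P {x}).toReal :=
          Real.sq_sqrt ENNReal.toReal_nonneg
        linear_combination (-(g x * h x)) * h2
    _ ≤ (∑ x, (Real.sqrt (P {x}).toReal * g x)^2) * (∑ x, (Real.sqrt (P {x}).toReal * h x)^2) :=
        key
    _ = (∑ x, (P {x}).toReal * (g x)^2) * (∑ x, (P {x}).toReal * (h x)^2) := by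
        congr 1
        · exact Finset.sum_congr rfl fun x _ => by
            rw [mul_pow, Real.sq_sqrt ENNReal.toReal_nonneg]
        · exact Finset.sum_congr rfl fun x _ => by
            rw [mul_pow, Real.sq_sqrt ENNReal.toReal_nonneg]

/-- Exact chi-squared (phi(t) = (t-1)^2) DRO identity on a finite sample space:
the robust value over densities `ρ` with `E_P[(ρ-1)^2] ≤ δ` equals
`E_P[Y] + √δ · √(Var_P[Y])`, attained at `ρ = 1 + √δ (Y - E_P Y)/√Var_P[Y]`
whenever this candidate density is nonnegative. -/
theorem chi_squared_dro_exact
    {α : Type*} [Fintype α] [MeasurableSpace α] [MeasurableSingletonClass α]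
    (P : Measure α) [IsProbabilityMeasure P]
    (Y : α → ℝ) (δ : ℝ) (hδ : 0 ≤ δ)
    (μY : ℝ) (hμY : μY = ∫ x, Y x ∂P)
    (v : ℝ) (hv : v = ∫ x, (Y x - μY)^2 ∂P) (hvpos : 0 < v)
    (hfeas : ∀ᵐ x ∂P, 0 ≤ 1 + Real.sqrt δ * (Y x - μY) / Real.sqrt v) :
    IsGreatest {r | ∃ ρ : α → ℝ, (∀ᵐ x ∂P, 0 ≤ ρ x) ∧ (∫ x, ρ x ∂P = 1) ∧
        (∫ x, (ρ x - 1)^2 ∂P ≤ δ) ∧ r = ∫ x, Y x * ρ x ∂P}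
      (μY + Real.sqrt δ * Real.sqrt v) := by
  have hvne : Real.sqrt v ≠ 0 := ne_of_gt (Real.sqrt_pos.mpr hvpos)
  have hsqv : Real.sqrt v * Real.sqrt v = v := Real.mul_self_sqrt hvpos.le
  have hsqd : Real.sqrt δ * Real.sqrt δ = δ := Real.mul_self_sqrt hδ
  have hint : ∀ f : α → ℝ, Integrable f P := fun f => .of_finite
  have hmean : ∫ x, (Y x - μY) ∂P = 0 := by
    rw [integral_sub (hint Y) (hint _), integral_const]
    simp [← hμY]
  constructor
  · -- membership
    refine ⟨fun x => 1 + Real.sqrt δ * (Y x - μY) / Real.sqrt v, hfeas, ?_, ?_, ?_⟩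
    · rw [integral_add (hint _) (hint _), integral_const]
      have : ∫ x, Real.sqrt δ * (Y x - μY) / Real.sqrt v ∂P
          = (Real.sqrt δ / Real.sqrt v) * ∫ x, (Y x - μY) ∂P := by
        rw [← integral_const_mul]; congr 1; ext x; ring
      simp [this, hmean]
    · have heq : ∀ x, ((1 + Real.sqrt δ * (Y x - μY) / Real.sqrt v) - 1)^2
          = (δ / v) * (Y x - μY)^2 := by
        intro x
        field_simp
        ring_nf
        rw [Real.sq_sqrt hδ, Real.sq_sqrt hvpos.le]
        ring
      calc ∫ x, ((1 + Real.sqrt δ * (Y x - μY) / Real.sqrt v) - 1)^2 ∂P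
          = ∫ x, (δ / v) * (Y x - μY)^2 ∂P := by simp_rw [heq]
        _ = (δ / v) * v := by rw [integral_const_mul, ← hv]
        _ = δ := by field_simp
        _ ≤ δ := le_rfl
    · have heq : ∀ x, Y x * (1 + Real.sqrt δ * (Y x - μY) / Real.sqrt v)
          = Y x + (Real.sqrt δ / Real.sqrt v) * ((Y x - μY)^2 + μY * (Y x - μY)) := by
        intro x; field_simp; ring
      rw [show (∫ x, Y x * (1 + Real.sqrt δ * (Y x - μY) / Real.sqrt v) ∂P)
          = ∫ x, (Y x + (Real.sqrt δ / Real.sqrt v) * ((Y x - μY)^2 + μY * (Y x - μY))) ∂P by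
        exact integral_congr_ae (Filter.Eventually.of_forall (fun x => heq x))]
      rw [integral_add (hint _) (hint _), integral_const_mul,
        integral_add (hint _) (hint _), integral_const_mul, hmean, ← hμY, ← hv]
      field_simp
      linear_combination Real.sqrt δ * hsqv
  · -- upper bound
    rintro r ⟨ρ, hρ0, hρ1, hρ2, rfl⟩
    have key : ∫ x, Y x * ρ x ∂P = μY + ∫ x, (Y x - μY) * (ρ x - 1) ∂P := by
      have : ∀ x, Y x * ρ x = (Y x - μY) * (ρ x - 1) + μY * ρ x + (Y x - μY) := by
        intro x; ring
      simp_rw [this]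
      rw [integral_add (hint _) (hint _), integral_add (hint _) (hint _),
        integral_const_mul, hρ1, hmean]
      ring
    rw [key]
    gcongr
    have cs := integral_cs_aux P (fun x => Y x - μY) (fun x => ρ x - 1)
    have h2 : (∫ x, (Y x - μY) * (ρ x - 1) ∂P)^2 ≤ v * δ := by
      refine le_trans cs ?_
      rw [← hv]
      have h0 : (0:ℝ) ≤ ∫ x, (Y x - μY)^2 ∂P := by rw [← hv]; exact hvpos.le
      exact mul_le_mul_of_nonneg_left hρ2 (hv ▸ hvpos.le)
    calc ∫ x, (Y x - μY) * (ρ x - 1) ∂P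
        ≤ |∫ x, (Y x - μY) * (ρ x - 1) ∂P| := le_abs_self _
      _ = Real.sqrt ((∫ x, (Y x - μY) * (ρ x - 1) ∂P)^2) := (Real.sqrt_sq_eq_abs _).symm
      _ ≤ Real.sqrt (v * δ) := Real.sqrt_le_sqrt h2
      _ = Real.sqrt δ * Real.sqrt v := by rw [Real.sqrt_mul hvpos.le, mul_comm]
end

section
/- With phi(t) = |t − 1| for t ≥ 0, for δ ∈ (0,2) and an essentially bounded random variable Y, sup_{Q: E_P[|dQ/dP − 1|] ≤ δ} E_Q[Y] = (δ/2)·ess sup(Y) + (1 − δ/2)·AV@R_{P, 1−δ/2}(Y). -/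
open MeasureTheory Filter Topology Real Set

section Aux

lemma quantile_exists {α : Type*} [MeasurableSpace α] (P : Measure α) [IsProbabilityMeasure P]
    (Y : α → ℝ) (hmeas : Measurable Y) (C : ℝ) (hbdd : ∀ᵐ x ∂P, |Y x| ≤ C)
    (a : ℝ) (ha0 : 0 < a) (ha1 : a ≤ 1) :
    ∃ τ : ℝ, (P {x | τ < Y x}).toReal ≤ a ∧ a ≤ (P {x | τ ≤ Y x}).toReal := by
  set F : ℝ → ℝ := fun t => (P {x | t ≤ Y x}).toReal with hF
  have hfin : ∀ s : Set α, P s ≠ ⊤ := fun s => measure_ne_top P s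
  have hFanti : ∀ ⦃s t : ℝ⦄, s ≤ t → F t ≤ F s := by
    intro s t hst
    exact ENNReal.toReal_mono (hfin _) (measure_mono (fun x hx => le_trans hst hx))
  set S : Set ℝ := {t | a ≤ F t} with hSdef
  have hSne : (-(|C|+1)) ∈ S := by
    have h1 : P {x | -(|C|+1) ≤ Y x} = 1 := by
      have : {x | -(|C|+1) ≤ Y x} =ᵐ[P] (Set.univ : Set α) := by
        rw [Filter.eventuallyEq_univ]
        filter_upwards [hbdd] with x hx
        have h1 := (abs_le.1 hx).1
        have h2 := le_abs_self C
        show -(|C|+1) ≤ Y x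
        linarith
      rw [measure_congr this, measure_univ]
    simp only [hSdef, Set.mem_setOf_eq, hF, h1, ENNReal.toReal_one]
    exact ha1
  have hSbdd : BddAbove S := by
    refine ⟨|C|+1, fun t ht => ?_⟩
    by_contra hlt
    push_neg at hlt
    have h0 : P {x | t ≤ Y x} = 0 := by
      rw [measure_eq_zero_iff_ae_notMem]
      filter_upwards [hbdd] with x hx
      have h1 := (abs_le.1 hx).2
      have h2 := le_abs_self C
      simp only [Set.mem_setOf_eq, not_le]
      linarith
    rw [hSdef, Set.mem_setOf_eq, hF] at ht
    simp only [h0, ENNReal.toReal_zero] at ht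
    linarith
  classical
  set τ := sSup S with hτ
  refine ⟨τ, ?_, ?_⟩
  · -- upper: P {τ < Y} ≤ a
    have hsub : {x | τ < Y x} = ⋃ n : ℕ, {x | τ + 1/(n+1) ≤ Y x} := by
      ext x
      simp only [Set.mem_setOf_eq, Set.mem_iUnion]
      constructor
      · intro h
        obtain ⟨n, hn⟩ := exists_nat_one_div_lt (sub_pos.2 h)
        exact ⟨n, by push_cast at hn ⊢; linarith⟩
      · intro ⟨n, hn⟩
        have : (0:ℝ) < 1/(n+1) := by positivity
        linarith
    have hmono : Monotone (fun n : ℕ => {x | τ + 1/(n+1) ≤ Y x}) := by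
      intro m n hmn x hx
      simp only [Set.mem_setOf_eq] at hx ⊢
      have hc : (m:ℝ) ≤ n := Nat.cast_le.2 hmn
      have : (1:ℝ)/(n+1) ≤ 1/(m+1) := by
        apply one_div_le_one_div_of_le (by positivity)
        linarith
      linarith
    have htend := tendsto_measure_iUnion_atTop (μ := P) hmono
    rw [← hsub] at htend
    have hle : ∀ n : ℕ, P {x | τ + 1/(n+1) ≤ Y x} ≤ ENNReal.ofReal a := by
      intro n
      have hnot : (τ + 1/(n+1)) ∉ S := fun h => by
        have h2 := le_csSup hSbdd h
        have hpos : (0:ℝ) < 1/(n+1) := by positivity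
        linarith
      rw [hSdef, Set.mem_setOf_eq, not_le] at hnot
      have := le_of_lt hnot
      rw [hF] at this
      exact ENNReal.le_ofReal_iff_toReal_le (hfin _) ha0.le |>.2 this
    have := le_of_tendsto htend (Filter.Eventually.of_forall hle)
    calc (P {x | τ < Y x}).toReal ≤ (ENNReal.ofReal a).toReal :=
          ENNReal.toReal_mono (by simp) this
      _ = a := ENNReal.toReal_ofReal ha0.le
  · -- lower: a ≤ P {τ ≤ Y}
    have hmem : ∀ n : ℕ, (τ - 1/(n+1)) ∈ S := by
      intro n
      have hpos : (0:ℝ) < 1/(n+1) := by positivity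
      obtain ⟨s, hs, hslt⟩ := exists_lt_of_lt_csSup ⟨_, hSne⟩ (by linarith : τ - 1/(n+1) < τ)
      rw [hSdef, Set.mem_setOf_eq] at hs ⊢
      exact le_trans hs (hFanti hslt.le)
    have hsub : {x | τ ≤ Y x} = ⋂ n : ℕ, {x | τ - 1/(n+1) ≤ Y x} := by
      ext x
      simp only [Set.mem_setOf_eq, Set.mem_iInter]
      constructor
      · intro h n
        have : (0:ℝ) < 1/(n+1) := by positivity
        linarith
      · intro h
        by_contra hlt
        push_neg at hlt
        obtain ⟨n, hn⟩ := exists_nat_one_div_lt (sub_pos.2 hlt)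
        have := h n
        push_cast at hn
        linarith
    have hanti : Antitone (fun n : ℕ => {x | τ - 1/(n+1) ≤ Y x}) := by
      intro m n hmn x hx
      simp only [Set.mem_setOf_eq] at hx ⊢
      have hc : (m:ℝ) ≤ n := Nat.cast_le.2 hmn
      have : (1:ℝ)/(n+1) ≤ 1/(m+1) := by
        apply one_div_le_one_div_of_le (by positivity)
        linarith
      linarith
    have hmeasn : ∀ n : ℕ, NullMeasurableSet {x | τ - 1/(n+1) ≤ Y x} P :=
      fun n => (measurableSet_le measurable_const hmeas).nullMeasurableSet
    have htend := tendsto_measure_iInter_atTop (μ := P) hmeasn hanti ⟨0, hfin _⟩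
    rw [← hsub] at htend
    have hge : ∀ n : ℕ, ENNReal.ofReal a ≤ P {x | τ - 1/(n+1) ≤ Y x} := by
      intro n
      have := hmem n
      rw [hSdef, Set.mem_setOf_eq, hF] at this
      exact (ENNReal.ofReal_le_iff_le_toReal (hfin _)).2 this
    have hP := ge_of_tendsto htend (Filter.Eventually.of_forall hge)
    calc a = (ENNReal.ofReal a).toReal := (ENNReal.toReal_ofReal ha0.le).symm
      _ ≤ (P {x | τ ≤ Y x}).toReal := ENNReal.toReal_mono (hfin _) hP

variable {α : Type*} [MeasurableSpace α] (P : Measure α) [IsProbabilityMeasure P]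

lemma integrable_of_ae_bdd {f : α → ℝ} (hf : AEStronglyMeasurable f P) (D : ℝ)
    (h : ∀ᵐ x ∂P, |f x| ≤ D) : Integrable f P :=
  Integrable.mono' (integrable_const D) hf (by simpa using h)

lemma integrable_of_nonneg_integral_one {ρ : α → ℝ} (hm : Measurable ρ)
    (h1 : ∫ x, ρ x ∂P = 1) : Integrable ρ P := by
  by_contra h
  rw [integral_undef h] at h1
  norm_num at h1

-- essSup facts
lemma essSup_facts {Y : α → ℝ} (hmeas : Measurable Y) (C : ℝ) (hbdd : ∀ᵐ x ∂P, |Y x| ≤ C) :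
    (∀ᵐ x ∂P, Y x ≤ essSup Y P) ∧ (∀ ε > 0, P {x | essSup Y P - ε ≤ Y x} ≠ 0) := by
  have hne : (ae P).NeBot := ae_neBot.2 (IsProbabilityMeasure.ne_zero P)
  have hb : IsBoundedUnder (· ≤ ·) (ae P) Y :=
    ⟨C, eventually_map.2 (by filter_upwards [hbdd] with x hx using (abs_le.1 hx).2)⟩
  have hb2 : IsBoundedUnder (· ≥ ·) (ae P) Y :=
    ⟨-C, eventually_map.2 (by filter_upwards [hbdd] with x hx using (abs_le.1 hx).1)⟩
  have hcb : IsCoboundedUnder (· ≤ ·) (ae P) Y := hb2.isCoboundedUnder_le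
  constructor
  · exact ae_le_essSup hb
  · intro ε hε h0
    have hae : ∀ᵐ x ∂P, Y x ≤ essSup Y P - ε := by
      have := measure_eq_zero_iff_ae_notMem.1 h0
      filter_upwards [this] with x hx
      simp only [Set.mem_setOf_eq, not_le] at hx
      linarith
    have := limsup_le_of_le hcb hae
    have hε' : essSup Y P ≤ essSup Y P - ε := this
    linarith

lemma upper_bound {Y : α → ℝ} (hmeas : Measurable Y) (C : ℝ) (hbdd : ∀ᵐ x ∂P, |Y x| ≤ C)
    {δ : ℝ} (hδ0 : 0 < δ) (hδ2 : δ < 2)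
    {ρ : α → ℝ} (hρm : Measurable ρ) (hρ0 : ∀ᵐ x ∂P, 0 ≤ ρ x) (hρ1 : ∫ x, ρ x ∂P = 1)
    (hρtv : ∫ x, |ρ x - 1| ∂P ≤ δ) (τ : ℝ) :
    ∫ x, Y x * ρ x ∂P ≤ δ/2 * essSup Y P + (1-δ/2)*τ + ∫ x, max (Y x - τ) 0 ∂P := by
  have hne : (ae P).NeBot := ae_neBot.2 (IsProbabilityMeasure.ne_zero P)
  have hC : 0 ≤ C := by
    obtain ⟨x, hx⟩ := hbdd.exists
    exact le_trans (abs_nonneg _) hx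
  set M := essSup Y P with hMdef
  have hM : ∀ᵐ x ∂P, Y x ≤ M := (essSup_facts P hmeas C hbdd).1
  have hρint : Integrable ρ P := integrable_of_nonneg_integral_one P hρm hρ1
  have hsub : Integrable (fun x => ρ x - 1) P := hρint.sub (integrable_const 1)
  have habs : Integrable (fun x => |ρ x - 1|) P := hsub.abs
  have hmaxρ : Integrable (fun x => max (ρ x - 1) 0) P := by
    refine habs.mono' ((hρm.sub measurable_const).max measurable_const).aestronglyMeasurable ?_
    filter_upwards with x
    rw [Real.norm_eq_abs]
    rcases le_total (ρ x - 1) 0 with h|h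
    · rw [max_eq_right h]; simp only [abs_zero]; exact abs_nonneg _
    · rw [max_eq_left h, abs_of_nonneg h]
  have hintsub : ∫ x, (ρ x - 1) ∂P = 0 := by
    rw [integral_sub hρint (integrable_const 1), hρ1, integral_const]
    simp
  have h3 : ∫ x, max (ρ x - 1) 0 ∂P ≤ δ/2 := by
    have hid : (fun x => max (ρ x - 1) 0) = fun x => ((ρ x - 1) + |ρ x - 1|)/2 := by
      funext x
      rcases le_total (ρ x - 1) 0 with h|h
      · rw [max_eq_right h, abs_of_nonpos h]; ring
      · rw [max_eq_left h, abs_of_nonneg h]; ring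
    rw [hid]
    rw [integral_div, integral_add hsub habs, hintsub]
    linarith
  have hYρ : Integrable (fun x => Y x * ρ x) P := by
    refine (hρint.const_mul C).mono' (hmeas.mul hρm).aestronglyMeasurable ?_
    filter_upwards [hbdd, hρ0] with x h1 h2
    rw [Real.norm_eq_abs, abs_mul, abs_of_nonneg h2]
    exact mul_le_mul_of_nonneg_right h1 h2
  have hmint : Integrable (fun x => max (Y x - τ) 0) P := by
    refine integrable_of_ae_bdd P ((hmeas.sub measurable_const).max measurable_const).aestronglyMeasurable (C + |τ|) ?_
    filter_upwards [hbdd] with x h1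
    rcases le_total (Y x - τ) 0 with h|h
    · rw [max_eq_right h]; simp only [abs_zero]
      have := abs_nonneg τ; linarith
    · rw [max_eq_left h, abs_of_nonneg h]
      have := (abs_le.1 h1).2
      have := neg_abs_le τ
      linarith
  have hm0 : 0 ≤ ∫ x, max (Y x - τ) 0 ∂P := integral_nonneg fun x => le_max_right _ _
  rcases le_total τ M with hτM | hτM
  · -- τ ≤ M
    have hmρ : Integrable (fun x => max (Y x - τ) 0 * ρ x) P := by
      refine (hρint.const_mul (C + |τ|)).mono'
        (((hmeas.sub measurable_const).max measurable_const).mul hρm).aestronglyMeasurable ?_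
      filter_upwards [hbdd, hρ0] with x h1 h2
      rw [Real.norm_eq_abs, abs_mul, abs_of_nonneg h2]
      refine mul_le_mul_of_nonneg_right ?_ h2
      rcases le_total (Y x - τ) 0 with h|h
      · rw [max_eq_right h]; simp only [abs_zero]
        have := abs_nonneg τ; linarith
      · rw [max_eq_left h, abs_of_nonneg h]
        have := (abs_le.1 h1).2
        have := neg_abs_le τ
        linarith
    have step1 : ∫ x, Y x * ρ x ∂P ≤ ∫ x, (τ * ρ x + max (Y x - τ) 0 * ρ x) ∂P := by
      refine integral_mono_ae hYρ ((hρint.const_mul τ).add hmρ) ?_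
      filter_upwards [hρ0] with x h2
      have h4 : Y x ≤ τ + max (Y x - τ) 0 := by
        rcases le_total (Y x - τ) 0 with h|h
        · rw [max_eq_right h]; linarith
        · rw [max_eq_left h]; linarith
      nlinarith
    have step2 : ∫ x, (τ * ρ x + max (Y x - τ) 0 * ρ x) ∂P
        = τ + ∫ x, max (Y x - τ) 0 * ρ x ∂P := by
      rw [integral_add (hρint.const_mul τ) hmρ, integral_const_mul, hρ1, mul_one]
    have step3 : ∫ x, max (Y x - τ) 0 * ρ x ∂P
        ≤ ∫ x, (max (Y x - τ) 0 + (M - τ) * max (ρ x - 1) 0) ∂P := by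
      refine integral_mono_ae hmρ (hmint.add (hmaxρ.const_mul _)) ?_
      filter_upwards [hρ0, hM] with x h2 h5
      have hm0' : 0 ≤ max (Y x - τ) 0 := le_max_right _ _
      have hmM : max (Y x - τ) 0 ≤ M - τ := by
        rcases le_total (Y x - τ) 0 with h|h
        · rw [max_eq_right h]; linarith
        · rw [max_eq_left h]; linarith
      rcases le_total 1 (ρ x) with h|h
      · rw [max_eq_left (by linarith : (0:ℝ) ≤ ρ x - 1)]
        nlinarith
      · rw [max_eq_right (by linarith : ρ x - 1 ≤ (0:ℝ))]
        nlinarith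
    have step4 : ∫ x, (max (Y x - τ) 0 + (M - τ) * max (ρ x - 1) 0) ∂P
        = (∫ x, max (Y x - τ) 0 ∂P) + (M - τ) * ∫ x, max (ρ x - 1) 0 ∂P := by
      rw [integral_add hmint (hmaxρ.const_mul _), integral_const_mul]
    have step5 : (M - τ) * ∫ x, max (ρ x - 1) 0 ∂P ≤ (M - τ) * (δ/2) :=
      mul_le_mul_of_nonneg_left h3 (by linarith)
    linarith [step1, step2, step3, step4, step5]
  · -- M ≤ τ
    have hb : ∫ x, Y x * ρ x ∂P ≤ ∫ x, M * ρ x ∂P := by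
      refine integral_mono_ae hYρ (hρint.const_mul M) ?_
      filter_upwards [hρ0, hM] with x h2 h5
      exact mul_le_mul_of_nonneg_right h5 h2
    rw [integral_const_mul, hρ1, mul_one] at hb
    nlinarith

lemma lower_bound {Y : α → ℝ} (hmeas : Measurable Y) (C : ℝ) (hbdd : ∀ᵐ x ∂P, |Y x| ≤ C)
    {δ : ℝ} (hδ0 : 0 < δ) (hδ2 : δ < 2) (ε : ℝ) (hε : 0 < ε) :
    ∃ ρ : α → ℝ, Measurable ρ ∧ (∀ᵐ x ∂P, 0 ≤ ρ x) ∧ (∫ x, ρ x ∂P = 1) ∧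
      (∫ x, |ρ x - 1| ∂P ≤ δ) ∧
      ∃ τ : ℝ, δ/2 * (essSup Y P - ε) + (1-δ/2)*τ + (∫ x, max (Y x - τ) 0 ∂P)
          ≤ ∫ x, Y x * ρ x ∂P := by
  have hfin : ∀ s : Set α, P s ≠ ⊤ := fun s => measure_ne_top P s
  set a : ℝ := 1 - δ/2 with ha
  have ha0 : 0 < a := by simp only [ha]; linarith
  have ha1 : a ≤ 1 := by simp only [ha]; linarith
  obtain ⟨τ, hτG, hτGE⟩ := quantile_exists P Y hmeas C hbdd a ha0 ha1
  set M := essSup Y P with hMdef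
  set G : Set α := {x | τ < Y x} with hGdef
  set E : Set α := {x | Y x = τ} with hEdef
  set A : Set α := {x | M - ε ≤ Y x} with hAdef
  have hGmeas : MeasurableSet G := measurableSet_lt measurable_const hmeas
  have hEmeas : MeasurableSet E := hmeas (measurableSet_singleton τ)
  have hAmeas : MeasurableSet A := measurableSet_le measurable_const hmeas
  set PrG : ℝ := (P G).toReal with hPrG
  set PrE : ℝ := (P E).toReal with hPrE
  have hPrG0 : 0 ≤ PrG := ENNReal.toReal_nonneg
  have hPrE0 : 0 ≤ PrE := ENNReal.toReal_nonneg
  -- {τ ≤ Y} = E ∪ G, disjoint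
  have hsplit : a ≤ PrG + PrE := by
    have hU : {x | τ ≤ Y x} = G ∪ E := by
      ext x; simp only [Set.mem_setOf_eq, Set.mem_union, hGdef, hEdef]
      constructor
      · intro h; rcases lt_or_eq_of_le h with h'|h'
        · exact Or.inl h'
        · exact Or.inr h'.symm
      · rintro (h|h); exacts [h.le, h.ge]
    have hd : Disjoint G E := by
      rw [Set.disjoint_left]
      intro x hxG hxE
      rw [hGdef, Set.mem_setOf_eq] at hxG
      rw [hEdef, Set.mem_setOf_eq] at hxE
      exact absurd hxE (ne_of_gt hxG)
    have := measure_union (μ := P) hd hEmeas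
    rw [hU] at hτGE
    rw [this] at hτGE
    rw [ENNReal.toReal_add (hfin _) (hfin _)] at hτGE
    exact hτGE
  set k : ℝ := if PrE = 0 then 0 else (a - PrG)/PrE with hk
  have hkE : k * PrE = a - PrG := by
    rw [hk]
    by_cases h : PrE = 0
    · simp only [h, if_pos rfl, mul_zero]
      have := hτG
      linarith [hsplit, hτG]
    · rw [if_neg h, div_mul_cancel₀ _ h]
  have hk0 : 0 ≤ k := by
    rw [hk]
    by_cases h : PrE = 0
    · simp [h]
    · rw [if_neg h]
      have hpe : 0 < PrE := lt_of_le_of_ne hPrE0 (Ne.symm h)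
      exact div_nonneg (by linarith) hpe.le
  have hk1 : k ≤ 1 := by
    rw [hk]
    by_cases h : PrE = 0
    · simp [h]
    · rw [if_neg h]
      have hpe : 0 < PrE := lt_of_le_of_ne hPrE0 (Ne.symm h)
      rw [div_le_one hpe]
      linarith
  have hPA : P A ≠ 0 := (essSup_facts P hmeas C hbdd).2 ε hε
  set p : ℝ := (P A).toReal with hp
  have hp0 : 0 < p := ENNReal.toReal_pos hPA (hfin _)
  set c : ℝ := (δ/2)/p with hc
  have hc0 : 0 ≤ c := div_nonneg (by linarith) hp0.le
  have hcp : c * p = δ/2 := div_mul_cancel₀ _ (ne_of_gt hp0)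
  set ρ : α → ℝ := fun x => c * A.indicator (fun _ => (1:ℝ)) x
      + G.indicator (fun _ => (1:ℝ)) x + k * E.indicator (fun _ => (1:ℝ)) x with hρ
  have hρmeas : Measurable ρ := by
    apply Measurable.add
    apply Measurable.add
    · exact (measurable_const.indicator hAmeas).const_mul c
    · exact measurable_const.indicator hGmeas
    · exact (measurable_const.indicator hEmeas).const_mul k
  have hindnn : ∀ (S : Set α) (x : α), 0 ≤ S.indicator (fun _ => (1:ℝ)) x := by
    intro S x; exact Set.indicator_nonneg (fun _ _ => zero_le_one) x
  have hindle : ∀ (S : Set α) (x : α), S.indicator (fun _ => (1:ℝ)) x ≤ 1 := by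
    intro S x; by_cases hx : x ∈ S <;> simp [hx]
  have hρ0 : ∀ x, 0 ≤ ρ x := by
    intro x
    have := hindnn A x; have := hindnn G x; have := hindnn E x
    have : 0 ≤ c * A.indicator (fun _ => (1:ℝ)) x := mul_nonneg hc0 (hindnn A x)
    have : 0 ≤ k * E.indicator (fun _ => (1:ℝ)) x := mul_nonneg hk0 (hindnn E x)
    simp only [hρ]
    positivity
  -- integrability of indicator pieces
  have hintA : Integrable (A.indicator (fun _ => (1:ℝ))) P := (integrable_const 1).indicator hAmeas
  have hintG : Integrable (G.indicator (fun _ => (1:ℝ))) P := (integrable_const 1).indicator hGmeas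
  have hintE : Integrable (E.indicator (fun _ => (1:ℝ))) P := (integrable_const 1).indicator hEmeas
  have i1 : Integrable (fun x => c * A.indicator (fun _ => (1:ℝ)) x) P := hintA.const_mul c
  have i3 : Integrable (fun x => k * E.indicator (fun _ => (1:ℝ)) x) P := hintE.const_mul k
  have i12 : Integrable (fun x => c * A.indicator (fun _ => (1:ℝ)) x
      + G.indicator (fun _ => (1:ℝ)) x) P := i1.add hintG
  have hρint : Integrable ρ P := i12.add i3
  have hIA : ∫ x, A.indicator (fun _ => (1:ℝ)) x ∂P = p := by
    rw [integral_indicator_const (1:ℝ) hAmeas]; simp [hp, Measure.real]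
  have hIG : ∫ x, G.indicator (fun _ => (1:ℝ)) x ∂P = PrG := by
    rw [integral_indicator_const (1:ℝ) hGmeas]; simp [hPrG, Measure.real]
  have hIE : ∫ x, E.indicator (fun _ => (1:ℝ)) x ∂P = PrE := by
    rw [integral_indicator_const (1:ℝ) hEmeas]; simp [hPrE, Measure.real]
  have hρ1 : ∫ x, ρ x ∂P = 1 := by
    simp only [hρ]
    rw [integral_add i12 i3, integral_add i1 hintG, integral_const_mul, integral_const_mul,
      hIA, hIG, hIE, hcp, hkE]
    simp only [ha]; ring
  -- TV bound
  have hGE_disj : ∀ x, x ∈ G → x ∉ E := by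
    intro x hxG hxE
    rw [hGdef, Set.mem_setOf_eq] at hxG
    rw [hEdef, Set.mem_setOf_eq] at hxE
    exact absurd hxE (ne_of_gt hxG)
  set h : α → ℝ := fun x => 1 - G.indicator (fun _ => (1:ℝ)) x - k * E.indicator (fun _ => (1:ℝ)) x with hh
  have j1 : Integrable (fun x => 1 - G.indicator (fun _ => (1:ℝ)) x) P := (integrable_const 1).sub hintG
  have hhint : Integrable h P := j1.sub i3
  have hptw : ∀ x, max (1 - ρ x) 0 ≤ h x := by
    intro x
    have h1 : 1 - ρ x ≤ h x := by
      simp only [hρ, hh]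
      have := mul_nonneg hc0 (hindnn A x)
      linarith
    have h2 : 0 ≤ h x := by
      simp only [hh]
      by_cases hxG : x ∈ G
      · have hxE := hGE_disj x hxG
        simp [Set.indicator_of_mem hxG, Set.indicator_of_notMem hxE]
      · by_cases hxE : x ∈ E
        · simp [Set.indicator_of_notMem hxG, Set.indicator_of_mem hxE]
          linarith
        · simp [Set.indicator_of_notMem hxG, Set.indicator_of_notMem hxE]
    exact max_le h1 h2
  have hIh : ∫ x, h x ∂P = δ/2 := by
    simp only [hh]
    rw [integral_sub j1 i3, integral_sub (integrable_const 1) hintG,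
      integral_const_mul, hIG, hIE, hkE, integral_const]
    simp only [measure_univ, ENNReal.toReal_one, probReal_univ, smul_eq_mul, mul_one, ha]
    ring
  have hmaxint : Integrable (fun x => max (1 - ρ x) 0) P := by
    refine hhint.mono' ?_ ?_
    · exact ((measurable_const.sub hρmeas).max measurable_const).aestronglyMeasurable
    · filter_upwards with x
      rw [Real.norm_eq_abs, abs_of_nonneg (le_max_right _ _)]
      exact hptw x
  have htv : ∫ x, |ρ x - 1| ∂P ≤ δ := by
    have hid : (fun x => |ρ x - 1|) = fun x => (ρ x - 1) + 2 * max (1 - ρ x) 0 := by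
      funext x
      rcases le_total (ρ x) 1 with hx|hx
      · rw [abs_of_nonpos (by linarith), max_eq_left (by linarith)]; ring
      · rw [abs_of_nonneg (by linarith), max_eq_right (by linarith)]; ring
    have j2 : Integrable (fun x => ρ x - 1) P := hρint.sub (integrable_const 1)
    have j4 : Integrable (fun x => 2 * max (1 - ρ x) 0) P := hmaxint.const_mul 2
    rw [hid, integral_add j2 j4, integral_sub hρint (integrable_const 1), hρ1,
      integral_const, integral_const_mul]
    simp only [measure_univ, ENNReal.toReal_one, probReal_univ, smul_eq_mul, mul_one, sub_self, zero_add]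
    have := integral_mono hmaxint hhint (fun x => hptw x)
    rw [hIh] at this
    linarith
  -- value of ∫ Y ρ
  have hYint : Integrable Y P := integrable_of_ae_bdd P hmeas.aestronglyMeasurable C hbdd
  have hYind : ∀ (S : Set α), MeasurableSet S → ∫ x, Y x * S.indicator (fun _ => (1:ℝ)) x ∂P = ∫ x in S, Y x ∂P := by
    intro S hS
    rw [← integral_indicator hS]
    congr 1
    funext x
    by_cases hx : x ∈ S <;> simp [Set.indicator_of_mem, Set.indicator_of_notMem, hx]
  have hYS : ∀ (S : Set α), MeasurableSet S → Integrable (fun x => Y x * S.indicator (fun _ => (1:ℝ)) x) P := by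
    intro S hS
    refine hYint.abs.mono' (hmeas.mul (measurable_const.indicator hS)).aestronglyMeasurable ?_
    filter_upwards with x
    rw [Real.norm_eq_abs, abs_mul]
    have e1 : |S.indicator (fun _ => (1:ℝ)) x| ≤ 1 := by
      rw [abs_of_nonneg (hindnn S x)]; exact hindle S x
    calc |Y x| * |S.indicator (fun _ => (1:ℝ)) x| ≤ |Y x| * 1 :=
          mul_le_mul_of_nonneg_left e1 (abs_nonneg _)
      _ = |Y x| := mul_one _
  have hIAY : (M - ε) * p ≤ ∫ x in A, Y x ∂P := by
    have hmono : ∫ x in A, (M - ε) ∂P ≤ ∫ x in A, Y x ∂P := by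
      refine setIntegral_mono_on (integrableOn_const ?_) hYint.integrableOn hAmeas ?_
      · exact hfin A
      · intro x hx; exact hx
    rw [setIntegral_const, smul_eq_mul] at hmono
    calc (M - ε) * p = p * (M - ε) := by ring
      _ ≤ _ := hmono
  have hIEY : ∫ x in E, Y x ∂P = τ * PrE := by
    have : ∫ x in E, Y x ∂P = ∫ x in E, τ ∂P := by
      refine setIntegral_congr_fun hEmeas ?_
      intro x hx; exact hx
    rw [this, setIntegral_const, smul_eq_mul, Measure.real]; ring
  have hImax : ∫ x, max (Y x - τ) 0 ∂P = (∫ x in G, Y x ∂P) - τ * PrG := by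
    have hid : (fun x => max (Y x - τ) 0) = G.indicator (fun x => Y x - τ) := by
      funext x
      by_cases hx : x ∈ G
      · rw [Set.indicator_of_mem hx]
        rw [hGdef, Set.mem_setOf_eq] at hx
        exact max_eq_left (by linarith)
      · rw [Set.indicator_of_notMem hx]
        rw [hGdef, Set.mem_setOf_eq, not_lt] at hx
        exact max_eq_right (by linarith)
    rw [hid, integral_indicator hGmeas,
      integral_sub hYint.integrableOn (integrableOn_const (hfin G)),
      setIntegral_const, smul_eq_mul, Measure.real]
    ring
  have hsplitY : (fun x => Y x * ρ x)
      = fun x => c * (Y x * A.indicator (fun _ => (1:ℝ)) x)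
        + (Y x * G.indicator (fun _ => (1:ℝ)) x)
        + k * (Y x * E.indicator (fun _ => (1:ℝ)) x) := by
    funext x; simp only [hρ]; ring
  have yA := hYS A hAmeas
  have yG := hYS G hGmeas
  have yE := hYS E hEmeas
  have y1 : Integrable (fun x => c * (Y x * A.indicator (fun _ => (1:ℝ)) x)) P := yA.const_mul c
  have y3 : Integrable (fun x => k * (Y x * E.indicator (fun _ => (1:ℝ)) x)) P := yE.const_mul k
  have y12 : Integrable (fun x => c * (Y x * A.indicator (fun _ => (1:ℝ)) x)
      + (Y x * G.indicator (fun _ => (1:ℝ)) x)) P := y1.add yG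
  have hval : ∫ x, Y x * ρ x ∂P
      = c * (∫ x in A, Y x ∂P) + (∫ x in G, Y x ∂P) + k * (τ * PrE) := by
    rw [hsplitY, integral_add y12 y3, integral_add y1 yG, integral_const_mul, integral_const_mul,
      hYind A hAmeas, hYind G hGmeas, hYind E hEmeas, hIEY]
  refine ⟨ρ, hρmeas, Filter.Eventually.of_forall hρ0, hρ1, htv, τ, ?_⟩
  rw [hval, hImax]
  have h1 : δ/2 * (M - ε) ≤ c * (∫ x in A, Y x ∂P) := by
    calc δ/2 * (M - ε) = c * ((M - ε) * p) := by rw [← hcp]; ring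
      _ ≤ c * (∫ x in A, Y x ∂P) := mul_le_mul_of_nonneg_left hIAY hc0
  have h2 : k * (τ * PrE) = τ * (a - PrG) := by
    rw [← hkE]; ring
  set IA := ∫ x in A, Y x ∂P
  set IG := ∫ x in G, Y x ∂P
  clear_value a M PrG PrE k p c IA IG
  linarith [h1, h2]


end Aux

/-- Total-variation divergence (phi(t) = |t-1|) robust representation:
for `δ ∈ (0,2)` and essentially bounded `Y`,
`sup_{Q : E_P|dQ/dP - 1| ≤ δ} E_Q[Y] = (δ/2) ess sup Y + (1 - δ/2) AV@R_{P,1-δ/2}(Y)`,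
where `AV@R_{P,α}(Y) = inf_τ {τ + α⁻¹ E_P[(Y-τ)₊]}`. -/
theorem tv_divergence_avar
    {α : Type*} [MeasurableSpace α] (P : Measure α) [IsProbabilityMeasure P]
    (Y : α → ℝ) (hmeas : Measurable Y) (C : ℝ) (hbdd : ∀ᵐ x ∂P, |Y x| ≤ C)
    (δ : ℝ) (hδ : δ ∈ Set.Ioo (0:ℝ) 2) :
    sSup {r | ∃ ρ : α → ℝ, Measurable ρ ∧ (∀ᵐ x ∂P, 0 ≤ ρ x) ∧ (∫ x, ρ x ∂P = 1) ∧
        (∫ x, |ρ x - 1| ∂P ≤ δ) ∧ r = ∫ x, Y x * ρ x ∂P}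
      = (δ/2) * essSup Y P
        + (1 - δ/2) * ⨅ τ : ℝ, (τ + (1 - δ/2)⁻¹ * ∫ x, max (Y x - τ) 0 ∂P) := by
  obtain ⟨hδ0, hδ2⟩ := hδ
  have ha0 : (0:ℝ) < 1 - δ/2 := by linarith
  have ha1 : (1:ℝ) - δ/2 ≤ 1 := by linarith
  have hane : (1:ℝ) - δ/2 ≠ 0 := ne_of_gt ha0
  set g : ℝ → ℝ := fun τ => τ + (1 - δ/2)⁻¹ * ∫ x, max (Y x - τ) 0 ∂P with hg
  set M := essSup Y P with hM
  set S := {r | ∃ ρ : α → ℝ, Measurable ρ ∧ (∀ᵐ x ∂P, 0 ≤ ρ x) ∧ (∫ x, ρ x ∂P = 1) ∧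
      (∫ x, |ρ x - 1| ∂P ≤ δ) ∧ r = ∫ x, Y x * ρ x ∂P} with hSdef
  have hYint : Integrable Y P := integrable_of_ae_bdd P hmeas.aestronglyMeasurable C hbdd
  have hmint : ∀ τ : ℝ, Integrable (fun x => max (Y x - τ) 0) P := by
    intro τ
    refine integrable_of_ae_bdd P
      ((hmeas.sub measurable_const).max measurable_const).aestronglyMeasurable (C + |τ|) ?_
    filter_upwards [hbdd] with x h1
    rcases le_total (Y x - τ) 0 with h|h
    · rw [max_eq_right h]; simp only [abs_zero]
      have := abs_nonneg τ
      have := le_trans (abs_nonneg (Y x)) h1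
      linarith
    · rw [max_eq_left h, abs_of_nonneg h]
      have := (abs_le.1 h1).2
      have := neg_abs_le τ
      linarith
  have hmnn : ∀ τ : ℝ, 0 ≤ ∫ x, max (Y x - τ) 0 ∂P :=
    fun τ => integral_nonneg fun x => le_max_right _ _
  have hinv1 : (1:ℝ) ≤ (1 - δ/2)⁻¹ := (one_le_inv₀ ha0).2 ha1
  have hglb : ∀ τ : ℝ, ∫ x, Y x ∂P ≤ g τ := by
    intro τ
    have h1 : ∫ x, (Y x - τ) ∂P ≤ ∫ x, max (Y x - τ) 0 ∂P :=
      integral_mono (hYint.sub (integrable_const τ)) (hmint τ) (fun x => le_max_left _ _)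
    rw [integral_sub hYint (integrable_const τ), integral_const] at h1
    simp only [measure_univ, ENNReal.toReal_one, probReal_univ, smul_eq_mul, one_mul] at h1
    have h2 : ∫ x, max (Y x - τ) 0 ∂P ≤ (1 - δ/2)⁻¹ * ∫ x, max (Y x - τ) 0 ∂P :=
      le_mul_of_one_le_left (hmnn τ) hinv1
    simp only [hg]
    linarith
  have hbddg : BddBelow (Set.range g) := ⟨∫ x, Y x ∂P, by rintro _ ⟨τ, rfl⟩; exact hglb τ⟩
  have hmulg : ∀ τ : ℝ, (1 - δ/2) * g τ = (1 - δ/2) * τ + ∫ x, max (Y x - τ) 0 ∂P := by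
    intro τ
    simp only [hg]
    rw [mul_add, ← mul_assoc, mul_inv_cancel₀ hane, one_mul]
  have hmem1 : (∫ x, Y x ∂P) ∈ S := by
    refine ⟨fun _ => 1, measurable_const, Filter.Eventually.of_forall (fun _ => zero_le_one), ?_, ?_, ?_⟩
    · simp
    · simp; linarith
    · simp
  have hub : ∀ r ∈ S, r ≤ δ/2 * M + (1 - δ/2) * ⨅ τ : ℝ, g τ := by
    rintro r ⟨ρ, hρm, hρ0, hρ1, hρtv, rfl⟩
    have key : ∀ τ : ℝ, ((∫ x, Y x * ρ x ∂P) - δ/2 * M) / (1 - δ/2) ≤ g τ := by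
      intro τ
      have h1 := upper_bound P hmeas C hbdd hδ0 hδ2 hρm hρ0 hρ1 hρtv τ
      rw [div_le_iff₀ ha0]
      have h2 := hmulg τ
      nlinarith [h1, h2]
    have h3 := le_ciInf key
    rw [div_le_iff₀ ha0] at h3
    nlinarith [h3]
  refine le_antisymm (csSup_le ⟨_, hmem1⟩ hub) ?_
  refine le_of_forall_pos_le_add ?_
  intro ε hε
  obtain ⟨ρ, hρm, hρ0, hρ1, hρtv, τ, hineq⟩ := lower_bound P hmeas C hbdd hδ0 hδ2 ε hε
  have hmemρ : (∫ x, Y x * ρ x ∂P) ∈ S := ⟨ρ, hρm, hρ0, hρ1, hρtv, rfl⟩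
  have h5 : (⨅ τ : ℝ, g τ) ≤ g τ := ciInf_le hbddg τ
  have h6 := hmulg τ
  have h7 : ∫ x, Y x * ρ x ∂P ≤ sSup S :=
    le_csSup ⟨_, hub⟩ hmemρ
  have h8 : δ/2 * ε ≤ ε := by nlinarith
  have h9 : (1 - δ/2) * (⨅ τ : ℝ, g τ) ≤ (1 - δ/2) * g τ :=
    mul_le_mul_of_nonneg_left h5 ha0.le
  rw [← hM] at hineq
  nlinarith [hineq, h6, h7, h8, h9]
end

section
/- Let V(g) := inf_{θ ∈ K} g(θ) on C(K), K compact nonempty. Then V is Hadamard directionally differentiable at every μ ∈ C(K), with directional derivative V'(μ; h) = inf_{θ ∈ argmin_K μ} h(θ): that is, for any sequences t_n ↓ 0 and h_n → h in sup norm, (V(μ + t_n h_n) − V(μ))/t_n → inf_{θ ∈ argmin_K μ} h(θ). -/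
open Filter Topology Set

lemma aux_isCompact_sep {α : Type*} [TopologicalSpace α] {K : Set α} (hK : IsCompact K)
    {f : α → ℝ} (hf : ContinuousOn f K) (c : ℝ) : IsCompact {x ∈ K | f x ≤ c} := by
  have hc : CompactSpace ↥K := isCompact_iff_compactSpace.mp hK
  have hcont : Continuous (fun x : K => f x) := hf.restrict
  have hclosed : IsClosed {x : K | f x ≤ c} := isClosed_le hcont continuous_const
  have hcomp : IsCompact {x : K | f x ≤ c} := hclosed.isCompact
  have himg : Subtype.val '' {x : K | f ↑x ≤ c} = {x ∈ K | f x ≤ c} := by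
    ext x
    simp only [Set.mem_image, Set.mem_setOf_eq, Set.mem_sep_iff]
    constructor
    · rintro ⟨⟨y, hy⟩, hfy, rfl⟩; exact ⟨hy, hfy⟩
    · rintro ⟨hx, hfx⟩; exact ⟨⟨x, hx⟩, hfx, rfl⟩
  simpa [himg] using hcomp.image continuous_subtype_val

/-- Hadamard directional differentiability of the infimum functional
`V(g) = inf_{θ ∈ K} g(θ)`: for any `t_n ↓ 0` and `h_n → h` uniformly on `K`,
`(V(μ + t_n h_n) - V(μ))/t_n → inf{h(θ) : θ ∈ argmin_K μ}`. -/
theorem inf_functional_hadamard {m : ℕ}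
    (K : Set (Fin m → ℝ)) (hK : IsCompact K) (hne : K.Nonempty)
    (μ : (Fin m → ℝ) → ℝ) (hμ : ContinuousOn μ K)
    (h : (Fin m → ℝ) → ℝ) (hh : ContinuousOn h K)
    (t : ℕ → ℝ) (htpos : ∀ n, 0 < t n) (ht0 : Tendsto t atTop (𝓝 0))
    (hn : ℕ → (Fin m → ℝ) → ℝ) (hhn : ∀ n, ContinuousOn (hn n) K)
    (hconv : TendstoUniformlyOn hn h atTop K) :
    Tendsto (fun n => (sInf ((fun θ => μ θ + t n * hn n θ) '' K) - sInf (μ '' K)) / t n)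
      atTop (𝓝 (sInf (h '' {θ ∈ K | μ θ = sInf (μ '' K)}))) := by
  set Vμ := sInf (μ '' K) with hVμ
  set S := {θ ∈ K | μ θ = Vμ} with hS
  set L := sInf (h '' S) with hL
  -- basic facts
  have bddμ : BddBelow (μ '' K) := (hK.image_of_continuousOn hμ).bddBelow
  have bddh : BddBelow (h '' K) := (hK.image_of_continuousOn hh).bddBelow
  have hVle : ∀ θ ∈ K, Vμ ≤ μ θ := fun θ hθ => csInf_le bddμ ⟨θ, hθ, rfl⟩
  -- S nonempty
  obtain ⟨θ0, hθ0K, hθ0min⟩ := hK.exists_isMinOn hne hμ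
  have hθ0S : θ0 ∈ S := by
    refine ⟨hθ0K, le_antisymm ?_ (hVle θ0 hθ0K)⟩
    exact le_csInf (hne.image μ) (by rintro y ⟨θ, hθ, rfl⟩; exact hθ0min hθ)
  have hSsub : h '' S ⊆ h '' K := Set.image_mono (f := h) (fun θ hθ => hθ.1)
  have bddhS : BddBelow (h '' S) := bddh.mono hSsub
  have hLle : ∀ θ ∈ S, L ≤ h θ := fun θ hθ => csInf_le bddhS ⟨θ, hθ, rfl⟩
  -- bound below h on K
  set B := sInf (h '' K) with hB
  have hBle : ∀ θ ∈ K, B ≤ h θ := fun θ hθ => csInf_le bddh ⟨θ, hθ, rfl⟩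
  rw [tendsto_order]
  constructor
  · -- lower bound: ∀ a < L, eventually a < quotient
    intro a ha
    set b := (a + L) / 2 with hb
    set c := (b + L) / 2 with hc
    have hab : a < b := by simp [hb]; linarith
    have hbc : b < c := by simp [hb, hc]; linarith
    have hcL : c < L := by simp [hb, hc]; linarith
    -- key claim: eventually b ≤ quotient
    have key : ∀ᶠ n in atTop, b ≤ (sInf ((fun θ => μ θ + t n * hn n θ) '' K) - Vμ) / t n := by
      set D := {θ ∈ K | h θ ≤ c} with hD
      have hminpos : (0:ℝ) < min 1 (c - b) := lt_min one_pos (by linarith)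
      have E1 : ∀ᶠ n in atTop, ∀ x ∈ K, dist (h x) (hn n x) < min 1 (c - b) :=
        (Metric.tendstoUniformlyOn_iff.mp hconv) _ hminpos
      by_cases hDne : D.Nonempty
      · -- D nonempty: get δ > 0
        have hDcomp : IsCompact D := aux_isCompact_sep hK hh c
        obtain ⟨θD, hθDD, hθDmin⟩ := hDcomp.exists_isMinOn hDne (hμ.mono (fun θ hθ => hθ.1))
        have hθDK : θD ∈ K := hθDD.1
        have hδpos : 0 < μ θD - Vμ := by
          rcases lt_or_eq_of_le (hVle θD hθDK) with hlt | heq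
          · linarith
          · exfalso
            have hmem : θD ∈ S := ⟨hθDK, heq.symm⟩
            have h1 := hLle θD hmem
            have h2 := hθDD.2
            linarith
        have E2 : ∀ᶠ n in atTop, t n * (b - B + 1) < μ θD - Vμ := by
          have htend : Tendsto (fun n => t n * (b - B + 1)) atTop (𝓝 0) := by
            simpa using ht0.mul_const (b - B + 1)
          exact htend.eventually_lt_const hδpos
        filter_upwards [E1, E2] with n hd ht2
        rw [le_div_iff₀ (htpos n)]
        have hsuff : Vμ + b * t n ≤ sInf ((fun θ => μ θ + t n * hn n θ) '' K) := by
          apply le_csInf (hne.image _)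
          rintro y ⟨θ, hθ, rfl⟩
          show Vμ + b * t n ≤ μ θ + t n * hn n θ
          rcases le_or_gt (h θ) c with hcase | hcase
          · have h1 : μ θD ≤ μ θ := hθDmin ⟨hθ, hcase⟩
            have hdist := hd θ hθ
            rw [Real.dist_eq] at hdist
            obtain ⟨hd1, hd2⟩ := abs_lt.mp hdist
            have hm1 : (min 1 (c - b) : ℝ) ≤ 1 := min_le_left _ _
            have h3 := hBle θ hθ
            have h2 : B - 1 ≤ hn n θ := by linarith
            have h4 : t n * (B - 1) ≤ t n * hn n θ :=
              mul_le_mul_of_nonneg_left h2 (le_of_lt (htpos n))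
            have hring : t n * (b - B + 1) + t n * (B - 1) = b * t n := by ring
            linarith
          · have hdist := hd θ hθ
            rw [Real.dist_eq] at hdist
            obtain ⟨hd1, hd2⟩ := abs_lt.mp hdist
            have hm2 : (min 1 (c - b) : ℝ) ≤ c - b := min_le_right _ _
            have hbn : b < hn n θ := by linarith
            have h4 : t n * b ≤ t n * hn n θ :=
              le_of_lt (mul_lt_mul_of_pos_left hbn (htpos n))
            have h5 := hVle θ hθ
            have hring : t n * b = b * t n := by ring
            linarith
        linarith
      · -- D empty : h > c on K
        have hall : ∀ θ ∈ K, c < h θ :=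
          fun θ hθ => lt_of_not_ge (fun hle => hDne ⟨θ, hθ, hle⟩)
        filter_upwards [E1] with n hd
        rw [le_div_iff₀ (htpos n)]
        have hsuff : Vμ + b * t n ≤ sInf ((fun θ => μ θ + t n * hn n θ) '' K) := by
          apply le_csInf (hne.image _)
          rintro y ⟨θ, hθ, rfl⟩
          show Vμ + b * t n ≤ μ θ + t n * hn n θ
          have hdist := hd θ hθ
          rw [Real.dist_eq] at hdist
          obtain ⟨hd1, hd2⟩ := abs_lt.mp hdist
          have hm2 : (min 1 (c - b) : ℝ) ≤ c - b := min_le_right _ _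
          have hbn : b < hn n θ := by linarith [hall θ hθ]
          have h4 : t n * b ≤ t n * hn n θ :=
            le_of_lt (mul_lt_mul_of_pos_left hbn (htpos n))
          have h5 := hVle θ hθ
          have hring : t n * b = b * t n := by ring
          linarith
        linarith
    filter_upwards [key] with n hk
    exact lt_of_lt_of_le hab hk
  · -- upper bound: ∀ a > L, eventually quotient < a
    intro a ha
    obtain ⟨y, ⟨θs, hθsS, rfl⟩, hya⟩ := exists_lt_of_csInf_lt (hθ0S.elim (fun _ _ => ⟨h θ0, θ0, hθ0S, rfl⟩) : (h '' S).Nonempty) ha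
    have hpt : Tendsto (fun n => hn n θs) atTop (𝓝 (h θs)) := hconv.tendsto_at hθsS.1
    have hev : ∀ᶠ n in atTop, hn n θs < a := hpt.eventually_lt_const hya
    filter_upwards [hev] with n hna
    have hle : sInf ((fun θ => μ θ + t n * hn n θ) '' K) ≤ Vμ + t n * hn n θs := by
      have h1 : sInf ((fun θ => μ θ + t n * hn n θ) '' K) ≤ μ θs + t n * hn n θs :=
        csInf_le ((hK.image_of_continuousOn (hμ.add (continuousOn_const.mul (hhn n)))).bddBelow)
          ⟨θs, hθsS.1, rfl⟩
      calc sInf ((fun θ => μ θ + t n * hn n θ) '' K) ≤ μ θs + t n * hn n θs := h1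
        _ = Vμ + t n * hn n θs := by rw [hθsS.2]
    have : (sInf ((fun θ => μ θ + t n * hn n θ) '' K) - Vμ) / t n ≤ hn n θs := by
      rw [div_le_iff₀ (htpos n)]
      linarith [hle]
    exact lt_of_le_of_lt this hna
end
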